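/- For every (u,i) ∈ D and every natural number p, the set V(u,i,p) = {(t,j) ∈ D : t ≼ u, p(t,u) ≥ p and j = (−1)^{ℓ(t,u)} i} is open in the Λ-duplicate D. -/

import Mathlib

/-- An element of Kurepa's tree `Λ`: an injective function `t : α → ω` with countable
ordinal domain `α` and coinfinite range.  The function is represented as a total function
on ordinals which takes the junk value `0` outside of the domain. -/
structure Lambda : Type 1 where
  toFun : Ordinal.{0} → ℕ
  dom : Ordinal.{0}
  countable : dom.card ≤ Cardinal.aleph0
  inj : ∀ β γ, β < dom → γ < dom → toFun β = toFun γ → β = γ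
  coinfinite : {n : ℕ | ∀ β, β < dom → toFun β ≠ n}.Infinite
  junk : ∀ β, ¬ β < dom → toFun β = 0

/-- The tree order on `Λ`: `s ≼ t` iff `t` extends `s`. -/
def Lambda.le (s t : Lambda) : Prop :=
  s.dom ≤ t.dom ∧ ∀ β, β < s.dom → s.toFun β = t.toFun β

/-- The strict tree order on `Λ`. -/
def Lambda.lt (s t : Lambda) : Prop := Lambda.le s t ∧ s ≠ t

/-- `r ≺ s` for `r ∈ Λ ∪ {0}` (`none` plays the role of the extra least element `0`). -/
def precLt : Option Lambda → Lambda → Prop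
  | none, _ => True
  | some r, s => Lambda.lt r s

/-- The interval `(r, t] = {s ∈ Λ : r ≺ s ≼ t}`, with `r ∈ Λ ∪ {0}`. -/
def lamIoc (r : Option Lambda) (t : Lambda) : Set Lambda :=
  {s | precLt r s ∧ Lambda.le s t}

/-- The position of the minimum of `t` on the ordinal interval `[δ, β)`. -/
noncomputable def minPos (t : Ordinal.{0} → ℕ) (δ β : Ordinal.{0}) : Ordinal.{0} :=
  sInf {ξ | δ ≤ ξ ∧ ξ < β ∧ ∀ η, δ ≤ η → η < β → t ξ ≤ t η}

lemma minPos_lt (t : Ordinal.{0} → ℕ) {δ β : Ordinal.{0}} (h : δ < β) : minPos t δ β < β := by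
  have hne : {ξ : Ordinal.{0} | δ ≤ ξ ∧ ξ < β ∧ ∀ η, δ ≤ η → η < β → t ξ ≤ t η}.Nonempty := by
    have h1 : {n : ℕ | ∃ ξ : Ordinal.{0}, δ ≤ ξ ∧ ξ < β ∧ t ξ = n}.Nonempty :=
      ⟨t δ, δ, le_refl _, h, rfl⟩
    obtain ⟨ξ, hξ1, hξ2, hξ3⟩ := Nat.sInf_mem h1
    refine ⟨ξ, hξ1, hξ2, fun η h1' h2' => ?_⟩
    rw [hξ3]
    exact Nat.sInf_le ⟨η, h1', h2', rfl⟩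
  obtain ⟨ξ, hξ⟩ := hne
  calc minPos t δ β ≤ ξ := csInf_le (OrderBot.bddBelow _) hξ
    _ < β := hξ.2.1

/-- The sequence `τ` computed from the starting ordinal `β₀` downwards: `τ` is obtained by
repeatedly passing from `β` to the position of the minimum of `t` on `[δ, β)`, stopping upon
reaching `δ`.  The resulting finite sequence `(β_k, …, β_1)` is recorded as a list in the
order `[β_k, …, β_1]` (so concatenation of the lists corresponds to `⌢`). -/
noncomputable def tauFrom (δ : Ordinal.{0}) (t : Ordinal.{0} → ℕ) : Ordinal.{0} → List Ordinal.{0} :=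
  WellFounded.fix wellFounded_lt
    (fun β IH => if h : δ < β then IH (minPos t δ β) (minPos_lt t h) ++ [minPos t δ β] else [])

/-- The finite sequence `τ(s,t)` of ordinals, for `s ≼ t` in `Λ`. -/
noncomputable def tau (s t : Lambda) : List Ordinal.{0} :=
  tauFrom s.dom t.toFun t.dom

/-- `ℓ(s,t)`, the length of `τ(s,t)`. -/
noncomputable def ell (s t : Lambda) : ℕ := (tau s t).length

/-- The underlying set of the `Λ`-duplicate: `D = Λ × {1, -1}`. -/
abbrev Dup : Type 1 := Lambda × ℤˣ

/-- The basic open sets `W(r,t,i)` of the `Λ`-duplicate. -/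
noncomputable def Wset (r : Option Lambda) (t : Lambda) (i : ℤˣ) : Set Dup :=
  {q | q.1 ∈ lamIoc r t ∧ q.2 = (-1) ^ ell q.1 t * i}

/-- The collection of all basic open sets `W(r,t,i)` with `r ≺ t`. -/
noncomputable def WBasis : Set (Set Dup) :=
  {S | ∃ (r : Option Lambda) (t : Lambda) (i : ℤˣ), precLt r t ∧ S = Wset r t i}

/-- The topology of the `Λ`-duplicate, generated by the basic sets `W(r,t,i)`. -/
noncomputable instance : TopologicalSpace Dup := TopologicalSpace.generateFrom WBasis

/-- `p(s,t)`: the value of `t` at the largest entry `β₁` of `τ(s,t)` when `s ≺ t`,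
and `p(t,t) = ∞`. -/
noncomputable def pval (s t : Lambda) : ℕ∞ :=
  match (tau s t).getLast? with
  | none => (⊤ : ℕ∞)
  | some β => (t.toFun β : ℕ∞)

/-- The sets `V(u,i,p) = {(t,j) ∈ D : t ≼ u, p(t,u) ≥ p, j = (-1)^{ℓ(t,u)} i}`. -/
noncomputable def Vset (u : Lambda) (i : ℤˣ) (p : ℕ) : Set Dup :=
  {q | Lambda.le q.1 u ∧ (p : ℕ∞) ≤ pval q.1 u ∧ q.2 = (-1) ^ ell q.1 u * i}


/-! A point `(t, j)` of `V(u,i,p)` has a basic neighbourhood `W(r,t,j)` inside `V(u,i,p)`.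
Choose `M` above `p` and above the values of `u` on `τ(t,u)`. As `t` is injective, only finitely
many `ξ < dom t` have `t(ξ) < M`, so there is `r ≺ t` such that `t ≥ M` on `[dom s, dom t)`
whenever `r ≺ s`. For such `s ≼ t`, the positions of the minima along `τ(t,u)` stay minimal on the
longer intervals starting at `dom s`, hence `τ(s,u) = τ(s,t) ⌢ τ(t,u)`. This gives the sign, and
`p(s,u)` is either `p(t,u)` or, when `t = u`, a value of `t` on `[dom s, dom t)`. -/

lemma minPos_spec (f : Ordinal.{0} → ℕ) {δ β : Ordinal.{0}} (h : δ < β) :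
    δ ≤ minPos f δ β ∧ minPos f δ β < β ∧ ∀ η, δ ≤ η → η < β → f (minPos f δ β) ≤ f η := by
  have hne : {ξ | δ ≤ ξ ∧ ξ < β ∧ ∀ η, δ ≤ η → η < β → f ξ ≤ f η}.Nonempty := by
    obtain ⟨ξ, hδξ, hξβ, hξ⟩ :=
      Nat.sInf_mem (s := {n | ∃ ξ, δ ≤ ξ ∧ ξ < β ∧ f ξ = n}) ⟨f δ, δ, le_rfl, h, rfl⟩
    exact ⟨ξ, hδξ, hξβ, fun η hδη hηβ => hξ ▸ Nat.sInf_le ⟨η, hδη, hηβ, rfl⟩⟩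
  exact csInf_mem hne

lemma minPos_congr {f g : Ordinal.{0} → ℕ} {δ β : Ordinal.{0}}
    (hfg : ∀ ξ, δ ≤ ξ → ξ < β → f ξ = g ξ) : minPos f δ β = minPos g δ β := by
  unfold minPos
  congr 1
  ext ξ
  refine and_congr_right fun hδξ => and_congr_right fun hξβ => forall₂_congr fun η hδη => ?_
  exact imp_congr_right fun hηβ => by rw [hfg ξ hδξ hξβ, hfg η hδη hηβ]

lemma minPos_eq_of_lt {f : Ordinal.{0} → ℕ} {δ δ' β : Ordinal.{0}} (hδ : δ ≤ δ') (hδ' : δ' < β)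
    (hlt : ∀ ξ, δ ≤ ξ → ξ < δ' → f (minPos f δ' β) < f ξ) : minPos f δ β = minPos f δ' β := by
  obtain ⟨hδ'm, hmβ, -⟩ := minPos_spec f hδ'
  unfold minPos
  congr 1
  ext ξ
  constructor
  · rintro ⟨hδξ, hξβ, hξ⟩
    have hδ'ξ : δ' ≤ ξ := not_lt.mp fun hξδ' =>
      (hξ _ (hδ.trans hδ'm) hmβ).not_gt (hlt ξ hδξ hξδ')
    exact ⟨hδ'ξ, hξβ, fun η hδ'η => hξ η (hδ.trans hδ'η)⟩
  · rintro ⟨hδ'ξ, hξβ, hξ⟩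
    refine ⟨hδ.trans hδ'ξ, hξβ, fun η hδη hηβ => ?_⟩
    rcases le_or_gt δ' η with hδ'η | hηδ'
    · exact hξ η hδ'η hηβ
    · exact ((hξ _ hδ'm hmβ).trans_lt (hlt η hδη hηδ')).le

lemma tauFrom_eq (δ : Ordinal.{0}) (f : Ordinal.{0} → ℕ) (β : Ordinal.{0}) :
    tauFrom δ f β =
      if δ < β then tauFrom δ f (minPos f δ β) ++ [minPos f δ β] else [] := by
  rw [tauFrom, WellFounded.fix_eq]
  exact dite_eq_ite

lemma tauFrom_of_le {δ β : Ordinal.{0}} (f : Ordinal.{0} → ℕ) (h : β ≤ δ) :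
    tauFrom δ f β = [] := by
  rw [tauFrom_eq, if_neg h.not_gt]

lemma tauFrom_of_lt {δ β : Ordinal.{0}} (f : Ordinal.{0} → ℕ) (h : δ < β) :
    tauFrom δ f β = tauFrom δ f (minPos f δ β) ++ [minPos f δ β] := by
  rw [tauFrom_eq, if_pos h]

lemma mem_tauFrom {δ β γ : Ordinal.{0}} {f : Ordinal.{0} → ℕ} (h : γ ∈ tauFrom δ f β) :
    δ ≤ γ ∧ γ < β := by
  induction β using WellFoundedLT.induction with
  | _ β IH =>
    rcases lt_or_ge δ β with hδβ | hβδ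
    · obtain ⟨hδm, hmβ, -⟩ := minPos_spec f hδβ
      rw [tauFrom_of_lt f hδβ, List.mem_append, List.mem_singleton] at h
      rcases h with h | rfl
      · exact ⟨(IH _ hmβ h).1, (IH _ hmβ h).2.trans hmβ⟩
      · exact ⟨hδm, hmβ⟩
    · simp [tauFrom_of_le f hβδ] at h

lemma tauFrom_congr {f g : Ordinal.{0} → ℕ} {δ β : Ordinal.{0}}
    (hfg : ∀ ξ, δ ≤ ξ → ξ < β → f ξ = g ξ) : tauFrom δ f β = tauFrom δ g β := by
  induction β using WellFoundedLT.induction with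
  | _ β IH =>
    rcases lt_or_ge δ β with hδβ | hβδ
    · obtain ⟨-, hmβ, -⟩ := minPos_spec g hδβ
      rw [tauFrom_of_lt f hδβ, tauFrom_of_lt g hδβ, minPos_congr hfg,
        IH _ hmβ fun ξ hδξ hξm => hfg ξ hδξ (hξm.trans hmβ)]
    · rw [tauFrom_of_le f hβδ, tauFrom_of_le g hβδ]

lemma tauFrom_eq_append {f : Ordinal.{0} → ℕ} {δ δ' β : Ordinal.{0}} (hδ : δ ≤ δ')
    (hδ' : δ' ≤ β) (hlt : ∀ γ ∈ tauFrom δ' f β, ∀ ξ, δ ≤ ξ → ξ < δ' → f γ < f ξ) :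
    tauFrom δ f β = tauFrom δ f δ' ++ tauFrom δ' f β := by
  induction β using WellFoundedLT.induction with
  | _ β IH =>
    rcases hδ'.lt_or_eq with hδ'β | rfl
    · obtain ⟨hδ'm, hmβ, -⟩ := minPos_spec f hδ'β
      have hτ := tauFrom_of_lt f hδ'β
      rw [hτ] at hlt
      rw [tauFrom_of_lt f (hδ.trans_lt hδ'β), hτ,
        minPos_eq_of_lt hδ hδ'β (hlt _ (List.mem_append_right _ (List.mem_singleton_self _))),
        IH _ hmβ hδ'm fun γ hγ => hlt γ (List.mem_append_left _ hγ), List.append_assoc]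
    · rw [tauFrom_of_le f le_rfl, List.append_nil]

namespace Lambda

lemma le_refl (s : Lambda) : s.le s := ⟨_root_.le_refl _, fun _ _ => rfl⟩

lemma le_trans {s t u : Lambda} (hst : s.le t) (htu : t.le u) : s.le u :=
  ⟨hst.1.trans htu.1, fun β hβ => (hst.2 β hβ).trans (htu.2 β (hβ.trans_le hst.1))⟩

lemma eq_of_le_of_dom_le {s t : Lambda} (hst : s.le t) (hts : t.dom ≤ s.dom) : s = t := by
  have hdom : s.dom = t.dom := hst.1.antisymm hts
  have hfun : s.toFun = t.toFun := funext fun β => by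
    by_cases hβ : β < s.dom
    · exact hst.2 β hβ
    · rw [s.junk β hβ, t.junk β (hdom ▸ hβ)]
  cases s
  cases t
  cases hdom
  cases hfun
  rfl

lemma dom_lt_of_lt {s t : Lambda} (h : s.lt t) : s.dom < t.dom :=
  lt_of_not_ge fun hts => h.2 (eq_of_le_of_dom_le h.1 hts)

lemma finite_setOf_toFun_lt (t : Lambda) (M : ℕ) :
    Set.Finite {ξ | ξ < t.dom ∧ t.toFun ξ < M} :=
  Set.Finite.of_finite_image ((Set.finite_Iio M).subset (by rintro _ ⟨ξ, ⟨-, hξ⟩, rfl⟩; exact hξ))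
    fun _ hx _ hy => t.inj _ _ hx.1 hy.1

noncomputable def restrict (t : Lambda) (γ : Ordinal.{0}) (h : γ ≤ t.dom) : Lambda where
  toFun ξ := if ξ < γ then t.toFun ξ else 0
  dom := γ
  countable := (Ordinal.card_le_card h).trans t.countable
  inj β β' hβ hβ' heq := by
    rw [if_pos hβ, if_pos hβ'] at heq
    exact t.inj β β' (hβ.trans_le h) (hβ'.trans_le h) heq
  coinfinite := t.coinfinite.mono fun n hn β hβ => by
    rw [if_pos hβ]
    exact hn β (hβ.trans_le h)
  junk _ hβ := if_neg hβ

lemma restrict_lt (t : Lambda) {γ : Ordinal.{0}} (h : γ < t.dom) : (t.restrict γ h.le).lt t :=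
  ⟨⟨h.le, fun _ hβ => if_pos hβ⟩, fun he => h.ne (congrArg Lambda.dom he)⟩

lemma exists_precLt_forall_le_toFun (t : Lambda) (M : ℕ) :
    ∃ r, precLt r t ∧ ∀ s, precLt r s → ∀ ξ, s.dom ≤ ξ → ξ < t.dom → M ≤ t.toFun ξ := by
  rcases Set.eq_empty_or_nonempty {ξ | ξ < t.dom ∧ t.toFun ξ < M} with hempty | hne
  · refine ⟨none, trivial, fun s _ ξ _ hξ => not_lt.mp fun hlt => ?_⟩
    exact hempty.subset ⟨hξ, hlt⟩
  · obtain ⟨γ, ⟨hγ, -⟩, hmax⟩ := Set.exists_max_image _ id (t.finite_setOf_toFun_lt M) hne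
    refine ⟨some (t.restrict γ hγ.le), t.restrict_lt hγ, fun s hs ξ hsξ hξ => ?_⟩
    have hγs : γ < s.dom := dom_lt_of_lt (s := t.restrict γ hγ.le) hs
    exact not_lt.mp fun hlt => (hmax ξ ⟨hξ, hlt⟩).not_gt (hγs.trans_le hsξ)

end Lambda

lemma tau_self (t : Lambda) : tau t t = [] := tauFrom_of_le _ le_rfl

lemma ell_self (t : Lambda) : ell t t = 0 := by
  rw [ell, tau_self, List.length_nil]

lemma tau_ne_nil_of_lt {t u : Lambda} (h : t.lt u) : tau t u ≠ [] := by
  rw [tau, tauFrom_of_lt _ (Lambda.dom_lt_of_lt h)]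
  exact List.concat_ne_nil _ _

lemma tau_eq_append {s t u : Lambda} (hst : s.le t) (htu : t.le u)
    (hlt : ∀ γ ∈ tau t u, ∀ ξ, s.dom ≤ ξ → ξ < t.dom → u.toFun γ < t.toFun ξ) :
    tau s u = tau s t ++ tau t u := by
  have hτ : tau s u = tauFrom s.dom u.toFun t.dom ++ tau t u :=
    tauFrom_eq_append hst.1 htu.1 fun γ hγ ξ hsξ hξt => htu.2 ξ hξt ▸ hlt γ hγ ξ hsξ hξt
  rw [hτ, tauFrom_congr fun ξ _ hξ => (htu.2 ξ hξ).symm]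
  rfl

lemma pval_eq_of_tau_eq_append {s t u : Lambda} (h : tau s u = tau s t ++ tau t u)
    (hne : tau t u ≠ []) : pval s u = pval t u := by
  unfold pval
  rw [h, List.getLast?_append_of_ne_nil _ hne]

lemma le_pval_of_le_toFun {s t : Lambda} {p : ℕ}
    (h : ∀ ξ, s.dom ≤ ξ → ξ < t.dom → p ≤ t.toFun ξ) : (p : ℕ∞) ≤ pval s t := by
  unfold pval
  split
  · exact le_top
  · next β hβ =>
    obtain ⟨hsβ, hβt⟩ := mem_tauFrom (List.mem_of_getLast? hβ)
    exact_mod_cast h β hsβ hβt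

lemma Wset_subset_Vset {r : Option Lambda} {t u : Lambda} {i : ℤˣ} {p : ℕ} (htu : t.le u)
    (hp : (p : ℕ∞) ≤ pval t u)
    (hr : ∀ s, precLt r s → ∀ ξ, s.dom ≤ ξ → ξ < t.dom →
      p ≤ t.toFun ξ ∧ ∀ γ ∈ tau t u, u.toFun γ < t.toFun ξ) :
    Wset r t ((-1) ^ ell t u * i) ⊆ Vset u i p := by
  rintro ⟨s, j⟩ ⟨⟨hrs, hst⟩, hj⟩
  dsimp only at hrs hst hj
  subst hj
  have hτ : tau s u = tau s t ++ tau t u :=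
    tau_eq_append hst htu fun γ hγ ξ hsξ hξt => (hr s hrs ξ hsξ hξt).2 γ hγ
  refine ⟨Lambda.le_trans hst htu, ?_, ?_⟩
  · by_cases htu' : t = u
    · subst htu'
      exact le_pval_of_le_toFun fun ξ hsξ hξt => (hr s hrs ξ hsξ hξt).1
    · rwa [pval_eq_of_tau_eq_append hτ (tau_ne_nil_of_lt ⟨htu, htu'⟩)]
  · have hℓ : ell s u = ell s t + ell t u := by
      rw [ell, hτ, List.length_append]
      rfl
    rw [hℓ, pow_add, mul_assoc]

/-- For every `(u,i) ∈ D` and every natural `p`, the set `V(u,i,p)` is open in the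
`Λ`-duplicate `D`. -/
theorem Vset_isOpen (u : Lambda) (i : ℤˣ) (p : ℕ) : IsOpen (Vset u i p) := by
  rw [isOpen_iff_forall_mem_open]
  rintro ⟨t, j⟩ ⟨htu, hp, hj⟩
  dsimp only at htu hp hj
  subst hj
  set M := max p ((tau t u).toFinset.sup u.toFun + 1)
  obtain ⟨r, hrt, hr⟩ := t.exists_precLt_forall_le_toFun M
  refine ⟨Wset r t ((-1) ^ ell t u * i), Wset_subset_Vset htu hp fun s hrs ξ hsξ hξt => ?_,
    TopologicalSpace.isOpen_generateFrom_of_mem ⟨r, t, _, hrt, rfl⟩,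
    ⟨hrt, t.le_refl⟩, by rw [ell_self, pow_zero, one_mul]⟩
  have hM : M ≤ t.toFun ξ := hr s hrs ξ hsξ hξt
  refine ⟨(le_max_left _ _).trans hM, fun γ hγ => ?_⟩
  have hγM : u.toFun γ < M :=
    (Nat.lt_succ_of_le (Finset.le_sup (List.mem_toFinset.mpr hγ))).trans_le (le_max_right _ _)
  exact hγM.trans_le hM
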